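/- Let g : ℝ → ℝ be a smooth function such that |g^(j)(ρ)| ≤ C₀·(1+ρ)^(−3) for all ρ ≥ 0 and all derivatives of order j = 0, 1, 2, 3, for some constant C₀ > 0. Then there exists a constant C > 0 such that for every t ≥ 1 the improper integral D(t) := lim_{R→∞} ∫₀^R (g(ρ) − g(0)) · cos(t·ρ²) dρ exists and satisfies |D(t)| ≤ C · t^(−3/2). -/

import Mathlib

open MeasureTheory Filter Set Real

namespace OscAux

noncomputable def h (g : ℝ → ℝ) (ρ : ℝ) : ℝ := (g ρ - g 0) / ρ
noncomputable def h1 (g : ℝ → ℝ) (ρ : ℝ) : ℝ := (deriv g ρ * ρ - (g ρ - g 0)) / ρ ^ 2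
noncomputable def h2 (g : ℝ → ℝ) (ρ : ℝ) : ℝ :=
  (deriv (deriv g) ρ * ρ * ρ ^ 2 - (deriv g ρ * ρ - (g ρ - g 0)) * (2 * ρ)) / (ρ ^ 2) ^ 2

lemma hasDerivAt_sinsq (t ρ : ℝ) : HasDerivAt (fun x => Real.sin (t * x ^ 2))
    (Real.cos (t * ρ ^ 2) * (t * (2 * ρ))) ρ := by
  have hu : HasDerivAt (fun x : ℝ => t * x ^ 2) (t * (2 * ρ)) ρ := by
    simpa using (hasDerivAt_pow 2 ρ).const_mul t
  exact (Real.hasDerivAt_sin (t * ρ ^ 2)).comp ρ hu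

lemma hasDerivAt_cossq (t ρ : ℝ) : HasDerivAt (fun x => Real.cos (t * x ^ 2))
    (-Real.sin (t * ρ ^ 2) * (t * (2 * ρ))) ρ := by
  have hu : HasDerivAt (fun x : ℝ => t * x ^ 2) (t * (2 * ρ)) ρ := by
    simpa using (hasDerivAt_pow 2 ρ).const_mul t
  exact (Real.hasDerivAt_cos (t * ρ ^ 2)).comp ρ hu

variable {g : ℝ → ℝ} {C₀ : ℝ}

lemma hasDerivAt_h {g : ℝ → ℝ} (hg : Differentiable ℝ g) {ρ : ℝ} (hρ : ρ ≠ 0) :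
    HasDerivAt (h g) (h1 g ρ) ρ := by
  have H : HasDerivAt (fun x => (g x - g 0) / x)
      ((deriv g ρ * ρ - (g ρ - g 0) * 1) / ρ ^ 2) ρ :=
    ((hg ρ).hasDerivAt.sub_const (g 0)).div (hasDerivAt_id ρ) hρ
  refine H.congr_deriv ?_; simp [h1]

lemma hasDerivAt_h1 {g : ℝ → ℝ} (hg : Differentiable ℝ g) (hg' : Differentiable ℝ (deriv g))
    {ρ : ℝ} (hρ : ρ ≠ 0) : HasDerivAt (h1 g) (h2 g ρ) ρ := by
  have hnum : HasDerivAt (fun x => deriv g x * x - (g x - g 0))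
      (deriv (deriv g) ρ * ρ + deriv g ρ * 1 - deriv g ρ) ρ :=
    ((hg' ρ).hasDerivAt.mul (hasDerivAt_id ρ)).sub ((hg ρ).hasDerivAt.sub_const (g 0))
  have hden : HasDerivAt (fun x : ℝ => x ^ 2) ((2:ℕ) * ρ ^ 1) ρ := hasDerivAt_pow 2 ρ
  have H := hnum.div hden (pow_ne_zero 2 hρ)
  refine H.congr_deriv (Eq.symm ?_)
  unfold h2
  push_cast
  ring

lemma mvt0 {φ φ' : ℝ → ℝ} {B ρ : ℝ} (hρ : 0 ≤ ρ)
    (hd : ∀ s, HasDerivAt φ (φ' s) s)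
    (hb : ∀ s ∈ Icc (0:ℝ) ρ, |φ' s| ≤ B) (h0 : φ 0 = 0) : |φ ρ| ≤ B * ρ := by
  have H := (convex_Icc (0:ℝ) ρ).norm_image_sub_le_of_norm_hasDerivWithin_le
      (f := φ) (f' := φ') (fun x _ => (hd x).hasDerivWithinAt)
      (fun x hx => by simpa [Real.norm_eq_abs] using hb x hx)
      (left_mem_Icc.2 hρ) (right_mem_Icc.2 hρ)
  simpa [h0, Real.norm_eq_abs, abs_of_nonneg hρ] using H

variable {g : ℝ → ℝ} {C₀ : ℝ}

lemma Bh (dg : Differentiable ℝ g) (K1 : ∀ s, 0 ≤ s → |deriv g s| ≤ C₀)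
    {ρ : ℝ} (hρ : 0 < ρ) : |h g ρ| ≤ C₀ := by
  have hm : |g ρ - g 0| ≤ C₀ * ρ :=
    mvt0 hρ.le (fun s => (dg s).hasDerivAt.sub_const (g 0))
      (fun s hs => K1 s hs.1) (by simp)
  rw [h, abs_div, abs_of_pos hρ, div_le_iff₀ hρ]
  linarith [hm]

lemma B1 (dg : Differentiable ℝ g) (dg1 : Differentiable ℝ (deriv g))
    (K2 : ∀ s, 0 ≤ s → |deriv (deriv g) s| ≤ C₀)
    (hC₀ : 0 < C₀) {ρ : ℝ} (hρ : 0 < ρ) : |h1 g ρ| ≤ C₀ := by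
  have hd : ∀ s, HasDerivAt (fun x => g x - g 0 - x * deriv g x)
      (-(s * deriv (deriv g) s)) s := by
    intro s
    have H := ((dg s).hasDerivAt.sub_const (g 0)).sub
      ((hasDerivAt_id s).mul (dg1 s).hasDerivAt)
    refine H.congr_deriv (Eq.symm ?_); simp [id]
  have hm : |g ρ - g 0 - ρ * deriv g ρ| ≤ (C₀ * ρ) * ρ := by
    refine mvt0 hρ.le hd (fun s hs => ?_) (by simp)
    rw [abs_neg, abs_mul, abs_of_nonneg hs.1]
    calc s * |deriv (deriv g) s| ≤ ρ * C₀ := by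
          have := K2 s hs.1
          have h2 : |deriv (deriv g) s| ≤ C₀ := this
          nlinarith [abs_nonneg (deriv (deriv g) s), hs.1, hs.2]
      _ = C₀ * ρ := by ring
  have heq : h1 g ρ = -(g ρ - g 0 - ρ * deriv g ρ) / ρ ^ 2 := by
    rw [h1]; ring
  rw [heq, abs_div, abs_neg, abs_of_pos (by positivity : (0:ℝ) < ρ ^ 2), div_le_iff₀ (by positivity)]
  nlinarith [hm]

lemma B2 (dg : Differentiable ℝ g) (dg1 : Differentiable ℝ (deriv g))
    (dg2 : Differentiable ℝ (deriv (deriv g)))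
    (K3 : ∀ s, 0 ≤ s → |deriv (deriv (deriv g)) s| ≤ C₀)
    (hC₀ : 0 < C₀) {ρ : ℝ} (hρ : 0 < ρ) : |h2 g ρ| ≤ C₀ := by
  have hd : ∀ s, HasDerivAt
      (fun x => 2 * (g x - g 0) - 2 * x * deriv g x + x ^ 2 * deriv (deriv g) x)
      (s ^ 2 * deriv (deriv (deriv g)) s) s := by
    intro s
    have H1 : HasDerivAt (fun x => 2 * (g x - g 0)) (2 * deriv g s) s :=
      ((dg s).hasDerivAt.sub_const (g 0)).const_mul 2
    have H2 : HasDerivAt (fun x : ℝ => 2 * x * deriv g x)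
        (2 * deriv g s + 2 * s * deriv (deriv g) s) s := by
      have := ((hasDerivAt_id s).const_mul 2).mul (dg1 s).hasDerivAt
      refine this.congr_deriv (Eq.symm ?_); simp [id]
    have H3 : HasDerivAt (fun x : ℝ => x ^ 2 * deriv (deriv g) x)
        (2 * s * deriv (deriv g) s + s ^ 2 * deriv (deriv (deriv g)) s) s := by
      have hp : HasDerivAt (fun x : ℝ => x ^ 2) ((2:ℕ) * s ^ 1) s := hasDerivAt_pow 2 s
      have := hp.mul (dg2 s).hasDerivAt
      refine this.congr_deriv (Eq.symm ?_); push_cast; ring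
    have := (H1.sub H2).add H3
    refine this.congr_deriv (Eq.symm ?_); ring
  have hm : |2 * (g ρ - g 0) - 2 * ρ * deriv g ρ + ρ ^ 2 * deriv (deriv g) ρ|
      ≤ (C₀ * ρ ^ 2) * ρ := by
    refine mvt0 hρ.le hd (fun s hs => ?_) (by simp)
    rw [abs_mul, abs_of_nonneg (by positivity : (0:ℝ) ≤ s ^ 2)]
    have h3 := K3 s hs.1
    have hsq : s ^ 2 ≤ ρ ^ 2 := pow_le_pow_left₀ hs.1 hs.2 2
    nlinarith [abs_nonneg (deriv (deriv (deriv g)) s), mul_le_mul_of_nonneg_left h3 (sq_nonneg s)]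
  have heq : h2 g ρ = (2 * (g ρ - g 0) - 2 * ρ * deriv g ρ + ρ ^ 2 * deriv (deriv g) ρ) / ρ ^ 3 := by
    rw [h2]; field_simp; ring
  rw [heq, abs_div, abs_of_pos (by positivity : (0:ℝ) < ρ ^ 3), div_le_iff₀ (by positivity)]
  nlinarith [hm, hρ]

lemma Dh (K0 : ∀ s, 0 ≤ s → |g s| ≤ C₀) {ρ : ℝ} (hρ : 1 ≤ ρ) :
    |h g ρ| ≤ 2 * C₀ / ρ := by
  have h0 : (0:ℝ) < ρ := by linarith
  rw [h, abs_div, abs_of_pos h0]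
  gcongr
  calc |g ρ - g 0| ≤ |g ρ| + |g 0| := abs_sub _ _
    _ ≤ C₀ + C₀ := add_le_add (K0 ρ (by linarith)) (K0 0 le_rfl)
    _ = 2 * C₀ := by ring


lemma aux_mul {a C ρ : ℝ} (hρ : 1 ≤ ρ) {k : ℕ} (hk : k ≤ 3) (ha : |a| ≤ C / ρ ^ 3) :
    ρ ^ k * |a| ≤ C := by
  have h0 : (0:ℝ) < ρ := by linarith
  have h1 : ρ ^ k * |a| ≤ ρ ^ 3 * |a| :=
    mul_le_mul_of_nonneg_right (pow_le_pow_right₀ hρ hk) (abs_nonneg a)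
  have h2 : ρ ^ 3 * |a| ≤ ρ ^ 3 * (C / ρ ^ 3) := by
    have : (0:ℝ) ≤ ρ ^ 3 := by positivity
    exact mul_le_mul_of_nonneg_left ha this
  have h3 : ρ ^ 3 * (C / ρ ^ 3) = C := by field_simp
  linarith

lemma D1 (K0 : ∀ s, 0 ≤ s → |g s| ≤ C₀) (L1 : ∀ s, 1 ≤ s → |deriv g s| ≤ C₀ / s ^ 3)
    (hC₀ : 0 < C₀) {ρ : ℝ} (hρ : 1 ≤ ρ) : |h1 g ρ| ≤ 3 * C₀ / ρ ^ 2 := by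
  have h0 : (0:ℝ) < ρ := by linarith
  rw [h1, abs_div, abs_of_pos (by positivity : (0:ℝ) < ρ ^ 2)]
  gcongr
  have e1 : |deriv g ρ * ρ| ≤ C₀ := by
    rw [abs_mul, abs_of_pos h0]
    have : |deriv g ρ| * ρ ≤ (C₀ / ρ ^ 3) * ρ := by
      have := L1 ρ hρ; nlinarith [abs_nonneg (deriv g ρ)]
    refine this.trans ?_
    have he : C₀ / ρ ^ 3 * ρ = C₀ / ρ ^ 2 := by field_simp
    rw [he]
    exact div_le_self hC₀.le (one_le_pow₀ hρ)
  have e2 : |g ρ - g 0| ≤ 2 * C₀ := by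
    calc |g ρ - g 0| ≤ |g ρ| + |g 0| := abs_sub _ _
      _ ≤ C₀ + C₀ := add_le_add (K0 ρ (by linarith)) (K0 0 le_rfl)
      _ = 2 * C₀ := by ring
  calc |deriv g ρ * ρ - (g ρ - g 0)| ≤ |deriv g ρ * ρ| + |g ρ - g 0| := abs_sub _ _
    _ ≤ C₀ + 2 * C₀ := add_le_add e1 e2
    _ = 3 * C₀ := by ring

lemma D2 (K0 : ∀ s, 0 ≤ s → |g s| ≤ C₀) (L1 : ∀ s, 1 ≤ s → |deriv g s| ≤ C₀ / s ^ 3)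
    (L2 : ∀ s, 1 ≤ s → |deriv (deriv g) s| ≤ C₀ / s ^ 3)
    (hC₀ : 0 < C₀) {ρ : ℝ} (hρ : 1 ≤ ρ) : |h2 g ρ| ≤ 7 * C₀ / ρ ^ 2 := by
  have h0 : (0:ℝ) < ρ := by linarith
  have heq : h2 g ρ = (2 * (g ρ - g 0) - 2 * ρ * deriv g ρ + ρ ^ 2 * deriv (deriv g) ρ) / ρ ^ 3 := by
    rw [h2]; field_simp; ring
  have e0 : |2 * (g ρ - g 0)| ≤ 4 * C₀ := by
    rw [abs_mul, abs_two]
    have : |g ρ - g 0| ≤ 2 * C₀ := by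
      calc |g ρ - g 0| ≤ |g ρ| + |g 0| := abs_sub _ _
        _ ≤ C₀ + C₀ := add_le_add (K0 ρ (by linarith)) (K0 0 le_rfl)
        _ = 2 * C₀ := by ring
    linarith
  have e1 : |2 * ρ * deriv g ρ| ≤ 2 * C₀ := by
    rw [abs_mul, abs_mul, abs_two, abs_of_pos h0, mul_assoc]
    have : ρ ^ 1 * |deriv g ρ| ≤ C₀ := aux_mul hρ (by norm_num) (L1 ρ hρ)
    simpa using by linarith
  have e2 : |ρ ^ 2 * deriv (deriv g) ρ| ≤ C₀ := by
    rw [abs_mul, abs_of_pos (by positivity : (0:ℝ) < ρ ^ 2)]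
    exact aux_mul hρ (by norm_num) (L2 ρ hρ)
  have enum : |2 * (g ρ - g 0) - 2 * ρ * deriv g ρ + ρ ^ 2 * deriv (deriv g) ρ| ≤ 7 * C₀ := by
    calc |2 * (g ρ - g 0) - 2 * ρ * deriv g ρ + ρ ^ 2 * deriv (deriv g) ρ|
        ≤ |2 * (g ρ - g 0) - 2 * ρ * deriv g ρ| + |ρ ^ 2 * deriv (deriv g) ρ| := abs_add_le _ _
      _ ≤ (|2 * (g ρ - g 0)| + |2 * ρ * deriv g ρ|) + |ρ ^ 2 * deriv (deriv g) ρ| := by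
          linarith [abs_sub (2 * (g ρ - g 0)) (2 * ρ * deriv g ρ)]
      _ ≤ (4 * C₀ + 2 * C₀) + C₀ := by linarith
      _ = 7 * C₀ := by ring
  rw [heq, abs_div, abs_of_pos (by positivity : (0:ℝ) < ρ ^ 3)]
  have s1 : |2 * (g ρ - g 0) - 2 * ρ * deriv g ρ + ρ ^ 2 * deriv (deriv g) ρ| / ρ ^ 3
      ≤ 7 * C₀ / ρ ^ 3 := by gcongr
  have s2 : 7 * C₀ / ρ ^ 3 ≤ 7 * C₀ / ρ ^ 2 :=
    div_le_div_of_nonneg_left (by positivity) (by positivity) (pow_le_pow_right₀ hρ (by norm_num))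
  linarith


end OscAux

set_option maxHeartbeats 4000000 in
open OscAux in
theorem oscillatory_correction_decay
    (g : ℝ → ℝ) (C₀ : ℝ) (hC₀ : 0 < C₀) (hg : ContDiff ℝ (⊤ : ℕ∞) g)
    (hbound : ∀ j : ℕ, j ≤ 3 → ∀ ρ : ℝ, 0 ≤ ρ →
      |iteratedDeriv j g ρ| ≤ C₀ * (1 + ρ) ^ (-(3:ℝ))) :
    ∃ C : ℝ, 0 < C ∧ ∀ t : ℝ, 1 ≤ t → ∃ D : ℝ,
      Tendsto (fun R : ℝ => ∫ ρ in Set.Ioo (0:ℝ) R, (g ρ - g 0) * Real.cos (t * ρ^2))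
          atTop (nhds D) ∧
        |D| ≤ C * t ^ (-(3:ℝ)/2) := by
  classical
  -- differentiability and continuity of derivatives
  have dg : Differentiable ℝ g := hg.differentiable (by simp)
  have hg' : ContDiff ℝ ((⊤:ℕ∞) : WithTop ℕ∞) g := hg.of_le (by simp)
  have hgd := contDiff_infty_iff_deriv.1 hg'
  have dg1 : Differentiable ℝ (deriv g) := hgd.2.differentiable (by simp)
  have hgd2 := contDiff_infty_iff_deriv.1 hgd.2
  have dg2 : Differentiable ℝ (deriv (deriv g)) := hgd2.2.differentiable (by simp)
  have cg1 : Continuous (deriv g) := dg1.continuous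
  have cg2 : Continuous (deriv (deriv g)) := dg2.continuous
  -- rewriting iterated derivatives
  have e1 : iteratedDeriv 1 g = deriv g := iteratedDeriv_one
  have e2 : iteratedDeriv 2 g = deriv (deriv g) := by
    rw [iteratedDeriv_succ, e1]
  have e3 : iteratedDeriv 3 g = deriv (deriv (deriv g)) := by
    rw [iteratedDeriv_succ, e2]
  -- basic bounds
  have pb : ∀ ρ : ℝ, 0 ≤ ρ → C₀ * (1 + ρ) ^ (-(3:ℝ)) ≤ C₀ := by
    intro ρ hρ
    have h1 : (1 + ρ) ^ (-(3:ℝ)) ≤ 1 :=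
      Real.rpow_le_one_of_one_le_of_nonpos (by linarith) (by norm_num)
    nlinarith
  have pb3 : ∀ ρ : ℝ, 1 ≤ ρ → C₀ * (1 + ρ) ^ (-(3:ℝ)) ≤ C₀ / ρ ^ 3 := by
    intro ρ hρ
    have h0 : (0:ℝ) < ρ := by linarith
    have h1 : (1 + ρ) ^ (-(3:ℝ)) ≤ ρ ^ (-(3:ℝ)) := by
      apply Real.rpow_le_rpow_of_nonpos h0 (by linarith) (by norm_num)
    have h2 : ρ ^ (-(3:ℝ)) = (ρ ^ (3:ℕ))⁻¹ := by
      rw [Real.rpow_neg h0.le, ← Real.rpow_natCast ρ 3]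
      norm_num
    rw [div_eq_mul_inv, ← h2]
    nlinarith
  have K0 : ∀ s, 0 ≤ s → |g s| ≤ C₀ := by
    intro s hs
    have := hbound 0 (by norm_num) s hs
    rw [iteratedDeriv_zero] at this
    exact this.trans (pb s hs)
  have K1 : ∀ s, 0 ≤ s → |deriv g s| ≤ C₀ := by
    intro s hs
    have := hbound 1 (by norm_num) s hs
    rw [e1] at this
    exact this.trans (pb s hs)
  have K2 : ∀ s, 0 ≤ s → |deriv (deriv g) s| ≤ C₀ := by
    intro s hs
    have := hbound 2 (by norm_num) s hs
    rw [e2] at this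
    exact this.trans (pb s hs)
  have K3 : ∀ s, 0 ≤ s → |deriv (deriv (deriv g)) s| ≤ C₀ := by
    intro s hs
    have := hbound 3 (by norm_num) s hs
    rw [e3] at this
    exact this.trans (pb s hs)
  have L1 : ∀ s, 1 ≤ s → |deriv g s| ≤ C₀ / s ^ 3 := by
    intro s hs
    have := hbound 1 (by norm_num) s (by linarith)
    rw [e1] at this
    exact this.trans (pb3 s hs)
  have L2 : ∀ s, 1 ≤ s → |deriv (deriv g) s| ≤ C₀ / s ^ 3 := by
    intro s hs
    have := hbound 2 (by norm_num) s (by linarith)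
    rw [e2] at this
    exact this.trans (pb3 s hs)
  have sin1 : ∀ y : ℝ, |Real.sin y| ≤ 1 := fun y =>
    abs_le.2 ⟨Real.neg_one_le_sin y, Real.sin_le_one y⟩
  have cos1 : ∀ y : ℝ, |Real.cos y| ≤ 1 := fun y =>
    abs_le.2 ⟨Real.neg_one_le_cos y, Real.cos_le_one y⟩
  -- measurability
  have mh1 : Measurable (h1 g) :=
    ((cg1.measurable.mul measurable_id).sub
      ((hg.continuous.measurable).sub measurable_const)).div
      (measurable_id.pow_const 2)
  have mh2 : Measurable (h2 g) := by
    apply Measurable.div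
    · exact ((cg2.measurable.mul measurable_id).mul (measurable_id.pow_const 2)).sub
        (((cg1.measurable.mul measurable_id).sub
          ((hg.continuous.measurable).sub measurable_const)).mul
          (measurable_const.mul measurable_id))
    · exact (measurable_id.pow_const 2).pow_const 2
  refine ⟨4 * C₀, by positivity, fun t ht => ?_⟩
  have ht0 : (0:ℝ) < t := by linarith
  have htne : t ≠ 0 := ht0.ne'
  have msin : Measurable (fun ρ : ℝ => Real.sin (t * ρ ^ 2)) :=
    (Real.continuous_sin.comp (continuous_const.mul (continuous_pow 2))).measurable
  have mcos : Measurable (fun ρ : ℝ => Real.cos (t * ρ ^ 2)) :=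
    (Real.continuous_cos.comp (continuous_const.mul (continuous_pow 2))).measurable
  -- integrability of h1 * sin on (0, ∞)
  have E1 : IntegrableOn (fun ρ => h1 g ρ * Real.sin (t * ρ ^ 2)) (Ioi (0:ℝ)) := by
    have meas : Measurable (fun ρ => h1 g ρ * Real.sin (t * ρ ^ 2)) := mh1.mul msin
    have part1 : IntegrableOn (fun ρ => h1 g ρ * Real.sin (t * ρ ^ 2)) (Ioc (0:ℝ) 1) := by
      refine Integrable.mono' (g := fun _ => C₀)
        (integrableOn_const measure_Ioc_lt_top.ne)
        meas.aestronglyMeasurable ?_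
      refine (ae_restrict_iff' measurableSet_Ioc).2 (ae_of_all _ fun x hx => ?_)
      rw [Real.norm_eq_abs, abs_mul]
      have b1 := B1 dg dg1 K2 hC₀ hx.1
      have bs := sin1 (t * x ^ 2)
      nlinarith [abs_nonneg (h1 g x), abs_nonneg (Real.sin (t * x ^ 2))]
    have part2 : IntegrableOn (fun ρ => h1 g ρ * Real.sin (t * ρ ^ 2)) (Ioi (1:ℝ)) := by
      refine Integrable.mono' (g := fun ρ => 3 * C₀ * ρ ^ (-2:ℝ))
        ((integrableOn_Ioi_rpow_of_lt (by norm_num) one_pos).const_mul (3 * C₀))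
        meas.aestronglyMeasurable ?_
      refine (ae_restrict_iff' measurableSet_Ioi).2 (ae_of_all _ fun x hx => ?_)
      have hx1 : (1:ℝ) ≤ x := le_of_lt hx
      have hx0 : (0:ℝ) < x := by linarith
      have hd1 := D1 K0 L1 hC₀ hx1
      have bs := sin1 (t * x ^ 2)
      have hxpow : x ^ (-2:ℝ) = (x ^ 2)⁻¹ := by
        rw [show (-2:ℝ) = -((2:ℕ):ℝ) by norm_num, Real.rpow_neg hx0.le, Real.rpow_natCast]
      rw [Real.norm_eq_abs, abs_mul, hxpow, ← div_eq_mul_inv]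
      calc |h1 g x| * |Real.sin (t * x ^ 2)| ≤ |h1 g x| * 1 :=
            mul_le_mul_of_nonneg_left bs (abs_nonneg _)
        _ = |h1 g x| := mul_one _
        _ ≤ 3 * C₀ / x ^ 2 := hd1
    have hu : Ioc (0:ℝ) 1 ∪ Ioi 1 = Ioi 0 := Ioc_union_Ioi_eq_Ioi zero_le_one
    rw [← hu]
    exact part1.union part2
  -- function F and the first integration by parts
  set F : ℝ → ℝ := fun R => h g R * Real.sin (t * R ^ 2) / (2 * t) with hF
  have keyA : ∀ R : ℝ, 0 < R →
      ∫ ρ in Ioo (0:ℝ) R, (g ρ - g 0) * Real.cos (t * ρ ^ 2)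
        = F R - (1 / (2 * t)) * ∫ ρ in (0:ℝ)..R, h1 g ρ * Real.sin (t * ρ ^ 2) := by
    intro R hR
    have hder : ∀ x ∈ Ioo (0:ℝ) R, HasDerivAt F
        ((g x - g 0) * Real.cos (t * x ^ 2) + h1 g x * Real.sin (t * x ^ 2) / (2 * t)) x := by
      intro x hx
      have hx0 : x ≠ 0 := ne_of_gt hx.1
      have H := ((hasDerivAt_h dg hx0).mul (hasDerivAt_sinsq t x)).div_const (2 * t)
      refine H.congr_deriv (Eq.symm ?_)
      simp only [h, h1]
      field_simp
      ring
    have hint1 : IntervalIntegrable (fun x => (g x - g 0) * Real.cos (t * x ^ 2)) volume 0 R :=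
      (((hg.continuous.sub continuous_const).mul
        (Real.continuous_cos.comp (continuous_const.mul (continuous_pow 2)))).intervalIntegrable 0 R)
    have hint2 : IntervalIntegrable (fun x => h1 g x * Real.sin (t * x ^ 2)) volume 0 R := by
      rw [intervalIntegrable_iff_integrableOn_Ioc_of_le hR.le]
      exact E1.mono_set Ioc_subset_Ioi_self
    have hint : IntervalIntegrable
        (fun x => (g x - g 0) * Real.cos (t * x ^ 2) + h1 g x * Real.sin (t * x ^ 2) / (2 * t))
        volume 0 R := hint1.add (hint2.div_const (2 * t))
    have h0 : Tendsto F (nhdsWithin 0 (Ioi 0)) (nhds 0) := by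
      have hbnd : ∀ᶠ (x:ℝ) in nhdsWithin 0 (Ioi 0), ‖F x‖ ≤ C₀ / 2 * x ^ 2 := by
        filter_upwards [self_mem_nhdsWithin] with x (hx : x ∈ Ioi (0:ℝ))
        have hx0 : (0:ℝ) < x := hx
        have hh := Bh dg K1 hx0
        have hs : |Real.sin (t * x ^ 2)| ≤ t * x ^ 2 := by
          have h1 : |Real.sin (t * x ^ 2)| ≤ |t * x ^ 2| := Real.abs_sin_le_abs
          rwa [abs_of_nonneg (show (0:ℝ) ≤ t * x ^ 2 by positivity)] at h1
        have : ‖F x‖ = |h g x| * |Real.sin (t * x ^ 2)| / (2 * t) := by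
          rw [hF, Real.norm_eq_abs, abs_div, abs_mul, abs_of_pos (by positivity : (0:ℝ) < 2 * t)]
        rw [this]
        rw [div_le_iff₀ (by positivity : (0:ℝ) < 2 * t)]
        nlinarith [abs_nonneg (h g x), abs_nonneg (Real.sin (t * x ^ 2))]
      have htd : Tendsto (fun x : ℝ => C₀ / 2 * x ^ 2) (nhds 0) (nhds 0) := by
        have hc : Continuous (fun x : ℝ => C₀ / 2 * x ^ 2) :=
          continuous_const.mul (continuous_pow 2)
        simpa using hc.tendsto 0
      exact squeeze_zero_norm' hbnd (htd.mono_left nhdsWithin_le_nhds)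
    have hRlim : Tendsto F (nhdsWithin R (Iio R)) (nhds (F R)) := by
      have cF : ContinuousAt F R := by
        have ch : ContinuousAt (fun x => (g x - g 0) / x) R :=
          ((hg.continuous.continuousAt).sub continuousAt_const).div continuousAt_id (ne_of_gt hR)
        have : ContinuousAt (fun x => (g x - g 0) / x * Real.sin (t * x ^ 2) / (2 * t)) R :=
          (ch.mul ((Real.continuous_sin.comp
            (continuous_const.mul (continuous_pow 2))).continuousAt)).div_const _
        exact this
      exact cF.continuousWithinAt
    have FTC := intervalIntegral.integral_eq_sub_of_hasDerivAt_of_tendsto hR hder hint h0 hRlim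
    have hsplit : (∫ y in (0:ℝ)..R,
        ((g y - g 0) * Real.cos (t * y ^ 2) + h1 g y * Real.sin (t * y ^ 2) / (2 * t)))
        = (∫ y in (0:ℝ)..R, (g y - g 0) * Real.cos (t * y ^ 2))
          + (∫ y in (0:ℝ)..R, h1 g y * Real.sin (t * y ^ 2)) / (2 * t) := by
      rw [← intervalIntegral.integral_div]
      exact intervalIntegral.integral_add hint1 (hint2.div_const _)
    rw [hsplit] at FTC
    have hIoo : ∫ ρ in Ioo (0:ℝ) R, (g ρ - g 0) * Real.cos (t * ρ ^ 2)
        = ∫ y in (0:ℝ)..R, (g y - g 0) * Real.cos (t * y ^ 2) := by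
      rw [intervalIntegral.integral_of_le hR.le, integral_Ioc_eq_integral_Ioo]
    rw [hIoo]
    linear_combination FTC
  -- limit of F at infinity
  have tendF : Tendsto F atTop (nhds 0) := by
    have hbnd : ∀ᶠ (R:ℝ) in atTop, ‖F R‖ ≤ C₀ / t * R⁻¹ := by
      filter_upwards [eventually_ge_atTop (1:ℝ)] with R hR
      have hR0 : (0:ℝ) < R := by linarith
      have hh := Dh K0 hR
      have hs := sin1 (t * R ^ 2)
      have : ‖F R‖ = |h g R| * |Real.sin (t * R ^ 2)| / (2 * t) := by
        rw [hF, Real.norm_eq_abs, abs_div, abs_mul, abs_of_pos (by positivity : (0:ℝ) < 2 * t)]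
      rw [this, div_le_iff₀ (by positivity : (0:ℝ) < 2 * t)]
      have e : C₀ / t * R⁻¹ * (2 * t) = 2 * C₀ / R := by field_simp
      rw [e]
      have h2 : |h g R| * |Real.sin (t * R ^ 2)| ≤ (2 * C₀ / R) * 1 :=
        mul_le_mul hh hs (abs_nonneg _) (by positivity)
      linarith
    have htd : Tendsto (fun R : ℝ => C₀ / t * R⁻¹) atTop (nhds 0) := by
      have h2 := (tendsto_inv_atTop_zero (𝕜 := ℝ)).const_mul (C₀ / t)
      simpa using h2
    exact squeeze_zero_norm' hbnd htd
  set I := ∫ ρ in Ioi (0:ℝ), h1 g ρ * Real.sin (t * ρ ^ 2) with hIdef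
  have tendI : Tendsto (fun R => ∫ ρ in (0:ℝ)..R, h1 g ρ * Real.sin (t * ρ ^ 2))
      atTop (nhds I) := intervalIntegral_tendsto_integral_Ioi 0 E1 tendsto_id
  refine ⟨0 - (1 / (2 * t)) * I, ?_, ?_⟩
  · apply Tendsto.congr' ?_ (tendF.sub (tendI.const_mul (1 / (2 * t))))
    filter_upwards [eventually_gt_atTop (0:ℝ)] with R hR
    exact (keyA R hR).symm
  · -- the quantitative bound
    have hδpos : (0:ℝ) < t ^ (-(1:ℝ)/2) := Real.rpow_pos_of_pos ht0 _
    set δ : ℝ := t ^ (-(1:ℝ)/2) with hδ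
    have hδ1 : δ ≤ 1 := Real.rpow_le_one_of_one_le_of_nonpos ht (by norm_num)
    have hδsq : δ * δ = t⁻¹ := by
      rw [hδ, ← Real.rpow_add ht0, show (-(1:ℝ)/2) + (-(1:ℝ)/2) = -1 by norm_num,
        Real.rpow_neg_one]
    have htδ2 : t * δ ^ 2 = 1 := by
      rw [sq, hδsq]
      field_simp
    set r : ℝ → ℝ := fun ρ => (h1 g ρ * Real.cos (t * ρ ^ 2) / ρ ^ 2
        - h2 g ρ * Real.cos (t * ρ ^ 2) / ρ) / (2 * t) with hrdef
    have mr : Measurable r :=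
      (((mh1.mul mcos).div (measurable_id.pow_const 2)).sub
        ((mh2.mul mcos).div measurable_id)).div_const (2 * t)
    have rbound : ∀ x : ℝ, δ < x → |r x| ≤ 5 * C₀ / t * (x ^ 2)⁻¹ := by
      intro x hx
      have hx0 : (0:ℝ) < x := hδpos.trans hx
      have c1 : |h1 g x * Real.cos (t * x ^ 2)| ≤ |h1 g x| := by
        rw [abs_mul]; exact mul_le_of_le_one_right (abs_nonneg _) (cos1 _)
      have c2 : |h2 g x * Real.cos (t * x ^ 2)| ≤ |h2 g x| := by
        rw [abs_mul]; exact mul_le_of_le_one_right (abs_nonneg _) (cos1 _)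
      have habs : |r x| ≤ (|h1 g x| / x ^ 2 + |h2 g x| / x) / (2 * t) := by
        rw [hrdef]
        dsimp only
        rw [abs_div, abs_of_pos (show (0:ℝ) < 2 * t by positivity)]
        gcongr
        calc |h1 g x * Real.cos (t * x ^ 2) / x ^ 2 - h2 g x * Real.cos (t * x ^ 2) / x|
            ≤ |h1 g x * Real.cos (t * x ^ 2) / x ^ 2| + |h2 g x * Real.cos (t * x ^ 2) / x| :=
              abs_sub _ _
          _ = |h1 g x * Real.cos (t * x ^ 2)| / x ^ 2 + |h2 g x * Real.cos (t * x ^ 2)| / x := by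
              rw [abs_div, abs_div, abs_of_pos hx0, abs_of_pos (show (0:ℝ) < x ^ 2 by positivity)]
          _ ≤ |h1 g x| / x ^ 2 + |h2 g x| / x := by gcongr
      rcases le_or_gt x 1 with hx1 | hx1
      · have b1 := B1 dg dg1 K2 hC₀ hx0
        have b2 := B2 dg dg1 dg2 K3 hC₀ hx0
        have hxx : C₀ / x ≤ C₀ / x ^ 2 := by
          apply div_le_div_of_nonneg_left hC₀.le (by positivity)
          nlinarith
        have sA : |h1 g x| / x ^ 2 ≤ C₀ / x ^ 2 := by gcongr
        have sB : |h2 g x| / x ≤ C₀ / x ^ 2 := by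
          refine le_trans ?_ hxx
          gcongr
        have step : (|h1 g x| / x ^ 2 + |h2 g x| / x) / (2 * t)
            ≤ (C₀ / x ^ 2 + C₀ / x ^ 2) / (2 * t) :=
          (div_le_div_iff_of_pos_right (by positivity)).2 (add_le_add sA sB)
        have e : (C₀ / x ^ 2 + C₀ / x ^ 2) / (2 * t) = C₀ / t * (x ^ 2)⁻¹ := by
          field_simp
          ring
        have e2 : C₀ / t * (x ^ 2)⁻¹ ≤ 5 * C₀ / t * (x ^ 2)⁻¹ := by
          have h1p : (0:ℝ) ≤ (x ^ 2)⁻¹ := by positivity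
          have hct : C₀ / t ≤ 5 * C₀ / t := (div_le_div_iff_of_pos_right ht0).2 (by linarith)
          exact mul_le_mul_of_nonneg_right hct h1p
        calc |r x| ≤ (|h1 g x| / x ^ 2 + |h2 g x| / x) / (2 * t) := habs
          _ ≤ (C₀ / x ^ 2 + C₀ / x ^ 2) / (2 * t) := step
          _ = C₀ / t * (x ^ 2)⁻¹ := e
          _ ≤ 5 * C₀ / t * (x ^ 2)⁻¹ := e2
      · have hx1' : (1:ℝ) ≤ x := hx1.le
        have hd1 := D1 K0 L1 hC₀ hx1'
        have hd2 := D2 K0 L1 L2 hC₀ hx1'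
        have q1 : |h1 g x| / x ^ 2 ≤ 3 * C₀ / x ^ 2 := by
          gcongr
          exact hd1.trans (div_le_self (by positivity) (one_le_pow₀ hx1'))
        have q2 : |h2 g x| / x ≤ 7 * C₀ / x ^ 2 := by
          have s1 : |h2 g x| / x ≤ (7 * C₀ / x ^ 2) / x := by gcongr
          have s2 : (7 * C₀ / x ^ 2) / x = 7 * C₀ / x ^ 3 := by
            field_simp
          have s3 : 7 * C₀ / x ^ 3 ≤ 7 * C₀ / x ^ 2 :=
            div_le_div_of_nonneg_left (by positivity) (by positivity)
              (pow_le_pow_right₀ hx1' (by norm_num))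
          calc |h2 g x| / x ≤ (7 * C₀ / x ^ 2) / x := s1
            _ = 7 * C₀ / x ^ 3 := s2
            _ ≤ 7 * C₀ / x ^ 2 := s3
        have e : (3 * C₀ / x ^ 2 + 7 * C₀ / x ^ 2) / (2 * t) = 5 * C₀ / t * (x ^ 2)⁻¹ := by
          field_simp
          ring
        calc |r x| ≤ (|h1 g x| / x ^ 2 + |h2 g x| / x) / (2 * t) := habs
          _ ≤ (3 * C₀ / x ^ 2 + 7 * C₀ / x ^ 2) / (2 * t) := by gcongr
          _ = 5 * C₀ / t * (x ^ 2)⁻¹ := e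
    have hxpow : ∀ x : ℝ, 0 < x → x ^ (-2:ℝ) = (x ^ 2)⁻¹ := by
      intro x hx0
      rw [show (-2:ℝ) = -((2:ℕ):ℝ) by norm_num, Real.rpow_neg hx0.le, Real.rpow_natCast]
    have E2 : IntegrableOn r (Ioi δ) := by
      refine Integrable.mono' (g := fun ρ => 5 * C₀ / t * ρ ^ (-2:ℝ))
        ((integrableOn_Ioi_rpow_of_lt (by norm_num) hδpos).const_mul _)
        mr.aestronglyMeasurable ?_
      refine (ae_restrict_iff' measurableSet_Ioi).2 (ae_of_all _ fun x hx => ?_)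
      have hx0 : (0:ℝ) < x := hδpos.trans hx
      rw [Real.norm_eq_abs, hxpow x hx0]
      exact rbound x hx
    set G : ℝ → ℝ := fun ρ => -(h1 g ρ * Real.cos (t * ρ ^ 2) / (2 * t * ρ)) with hG
    have hGd : ∀ x ∈ Ici δ, HasDerivAt G (h1 g x * Real.sin (t * x ^ 2) + r x) x := by
      intro x hx
      have hx0 : (0:ℝ) < x := lt_of_lt_of_le hδpos hx
      have hden : HasDerivAt (fun y : ℝ => 2 * t * y) (2 * t) x := by
        simpa using (hasDerivAt_id x).const_mul (2 * t)
      have H := (((hasDerivAt_h1 dg dg1 hx0.ne').mul (hasDerivAt_cossq t x)).div hden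
        (show 2 * t * x ≠ 0 by positivity)).neg
      refine H.congr_deriv (Eq.symm ?_)
      simp only [Pi.mul_apply]
      rw [hrdef]
      field_simp
      ring
    have hGint : IntegrableOn (fun x => h1 g x * Real.sin (t * x ^ 2) + r x) (Ioi δ) :=
      (E1.mono_set (Ioi_subset_Ioi hδpos.le)).add E2
    have hGtop : Tendsto G atTop (nhds 0) := by
      have hbnd : ∀ᶠ (R:ℝ) in atTop, ‖G R‖ ≤ 3 * C₀ / (2 * t) * R⁻¹ := by
        filter_upwards [eventually_ge_atTop (1:ℝ)] with R hR
        have hR0 : (0:ℝ) < R := by linarith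
        have hd1 := D1 K0 L1 hC₀ hR
        have e : ‖G R‖ = |h1 g R| * |Real.cos (t * R ^ 2)| / (2 * t * R) := by
          rw [hG, Real.norm_eq_abs, abs_neg, abs_div, abs_mul,
            abs_of_pos (show (0:ℝ) < 2 * t * R by positivity)]
        rw [e, div_le_iff₀ (show (0:ℝ) < 2 * t * R by positivity)]
        have te : 3 * C₀ / (2 * t) * R⁻¹ * (2 * t * R) = 3 * C₀ := by
          field_simp
        rw [te]
        have c1 : |h1 g R| * |Real.cos (t * R ^ 2)| ≤ |h1 g R| :=
          mul_le_of_le_one_right (abs_nonneg _) (cos1 _)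
        have c2 : |h1 g R| ≤ 3 * C₀ :=
          hd1.trans (div_le_self (by positivity) (one_le_pow₀ hR))
        linarith
      have htd : Tendsto (fun R : ℝ => 3 * C₀ / (2 * t) * R⁻¹) atTop (nhds 0) := by
        have h2 := (tendsto_inv_atTop_zero (𝕜 := ℝ)).const_mul (3 * C₀ / (2 * t))
        simpa using h2
      exact squeeze_zero_norm' hbnd htd
    have keyB := integral_Ioi_of_hasDerivAt_of_tendsto' hGd hGint hGtop
    have splitInt : ∫ x in Ioi δ, (h1 g x * Real.sin (t * x ^ 2) + r x)
        = (∫ x in Ioi δ, h1 g x * Real.sin (t * x ^ 2)) + ∫ x in Ioi δ, r x :=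
      integral_add (E1.mono_set (Ioi_subset_Ioi hδpos.le)) E2
    have EIoi : (∫ x in Ioi δ, h1 g x * Real.sin (t * x ^ 2)) = -G δ - ∫ x in Ioi δ, r x := by
      rw [splitInt] at keyB
      linarith
    have hIsplit : I = (∫ x in Ioc (0:ℝ) δ, h1 g x * Real.sin (t * x ^ 2))
        + ∫ x in Ioi δ, h1 g x * Real.sin (t * x ^ 2) := by
      rw [hIdef, ← Ioc_union_Ioi_eq_Ioi hδpos.le]
      exact setIntegral_union (Ioc_disjoint_Ioi le_rfl) measurableSet_Ioi
        (E1.mono_set (fun y hy => hy.1)) (E1.mono_set (Ioi_subset_Ioi hδpos.le))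
    have m1 : |∫ x in Ioc (0:ℝ) δ, h1 g x * Real.sin (t * x ^ 2)| ≤ C₀ * δ := by
      have hCb : ∀ x ∈ Ioc (0:ℝ) δ, ‖h1 g x * Real.sin (t * x ^ 2)‖ ≤ C₀ := by
        intro x hx
        rw [Real.norm_eq_abs, abs_mul]
        have b1 := B1 dg dg1 K2 hC₀ hx.1
        have bs := sin1 (t * x ^ 2)
        nlinarith [abs_nonneg (h1 g x), abs_nonneg (Real.sin (t * x ^ 2))]
      have H := norm_setIntegral_le_of_norm_le_const (μ := volume) (s := Ioc (0:ℝ) δ)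
        (C := C₀) measure_Ioc_lt_top hCb
      rw [Real.norm_eq_abs] at H
      refine H.trans ?_
      rw [measureReal_def, Real.volume_Ioc, ENNReal.toReal_ofReal (by linarith)]
      simp
    have m2 : |G δ| ≤ C₀ * δ / 2 := by
      have e : |G δ| = |h1 g δ| * |Real.cos (t * δ ^ 2)| / (2 * t * δ) := by
        rw [hG]
        dsimp only
        rw [abs_neg, abs_div, abs_mul, abs_of_pos (show (0:ℝ) < 2 * t * δ by positivity)]
      have b1 := B1 dg dg1 K2 hC₀ hδpos
      have c1 : |h1 g δ| * |Real.cos (t * δ ^ 2)| ≤ C₀ :=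
        (mul_le_of_le_one_right (abs_nonneg _) (cos1 _)).trans b1
      rw [e, div_le_iff₀ (show (0:ℝ) < 2 * t * δ by positivity)]
      have e3 : C₀ * δ / 2 * (2 * t * δ) = C₀ := by
        have e4 : C₀ * δ / 2 * (2 * t * δ) = C₀ * (t * δ ^ 2) := by ring
        rw [e4, htδ2, mul_one]
      linarith [c1, e3]
    have m3 : |∫ x in Ioi δ, r x| ≤ 5 * C₀ * δ := by
      have hmaj : Integrable (fun ρ : ℝ => 5 * C₀ / t * ρ ^ (-2:ℝ))
          (volume.restrict (Ioi δ)) :=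
        (integrableOn_Ioi_rpow_of_lt (by norm_num) hδpos).const_mul _
      have hle : ‖∫ x in Ioi δ, r x‖ ≤ ∫ x in Ioi δ, 5 * C₀ / t * x ^ (-2:ℝ) := by
        apply norm_integral_le_of_norm_le hmaj
        refine (ae_restrict_iff' measurableSet_Ioi).2 (ae_of_all _ fun x hx => ?_)
        have hx0 : (0:ℝ) < x := hδpos.trans hx
        rw [Real.norm_eq_abs, hxpow x hx0]
        exact rbound x hx
      have hval : ∫ x in Ioi δ, 5 * C₀ / t * x ^ (-2:ℝ) = 5 * C₀ / t * δ⁻¹ := by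
        rw [integral_const_mul, integral_Ioi_rpow_of_lt (by norm_num) hδpos,
          show ((-2:ℝ) + 1) = -1 by norm_num, Real.rpow_neg_one]
        ring
      have htδ1 : t * δ = δ⁻¹ := by
        field_simp
        linear_combination htδ2
      have hval2 : 5 * C₀ / t * δ⁻¹ = 5 * C₀ * δ := by
        rw [← htδ1]
        field_simp
      rw [← Real.norm_eq_abs]
      rw [hval, hval2] at hle
      exact hle
    have Itotal : |I| ≤ 7 * C₀ * δ := by
      rw [hIsplit, EIoi]
      calc |(∫ x in Ioc (0:ℝ) δ, h1 g x * Real.sin (t * x ^ 2)) + (-G δ - ∫ x in Ioi δ, r x)|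
          ≤ |∫ x in Ioc (0:ℝ) δ, h1 g x * Real.sin (t * x ^ 2)| + |(-G δ - ∫ x in Ioi δ, r x)| :=
            abs_add_le _ _
        _ ≤ |∫ x in Ioc (0:ℝ) δ, h1 g x * Real.sin (t * x ^ 2)| + (|G δ| + |∫ x in Ioi δ, r x|) := by
            have := abs_sub (-G δ) (∫ x in Ioi δ, r x)
            rw [abs_neg] at this
            linarith
        _ ≤ C₀ * δ + (C₀ * δ / 2 + 5 * C₀ * δ) := by linarith
        _ ≤ 7 * C₀ * δ := by nlinarith
    have hrw32 : t ^ (-(3:ℝ)/2) = δ * t⁻¹ := by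
      rw [hδ, ← Real.rpow_neg_one t, ← Real.rpow_add ht0]
      norm_num
    rw [zero_sub, abs_neg, abs_mul, abs_of_pos (show (0:ℝ) < 1 / (2 * t) by positivity), hrw32]
    have s1 : 1 / (2 * t) * |I| ≤ 1 / (2 * t) * (7 * C₀ * δ) :=
      mul_le_mul_of_nonneg_left Itotal (by positivity)
    have u_pos : (0:ℝ) < C₀ * δ * t⁻¹ := by positivity
    have s2 : 1 / (2 * t) * (7 * C₀ * δ) = 7 / 2 * (C₀ * δ * t⁻¹) := by
      field_simp
    have s3 : 4 * C₀ * (δ * t⁻¹) = 4 * (C₀ * δ * t⁻¹) := by ring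
    rw [s3]
    rw [s2] at s1
    linarith
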